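/- Assume the relative quality functions satisfy q_j(A) = 1/(n·C(n−1,|A|)) for every j ∈ C and A ⊆ C∖{j}. Then for every k ∈ {1,…,n}, the signature coordinate satisfies p_k = ∑_{A⊆C, |A|≤n−k+1} d(A) · (|A|/k) · C(n−|A|, k−1) / C(n, k). -/

import Mathlib

/-!
Off the null event of ties the lifetimes are distinct. Let `j` be the component failing `k`-th
and `A` the set of `j` and its `n - k` outlivers (the components still working just before `T_j`).
Since `T_C ≥ t` iff `{i | t ≤ T_i}` is a path set, `T_C = T_j` iff `A` is a path set and
`A ∖ {j}` is not. Summing over the possible pairs `(A, j)` gives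
`p_k = ∑_{|A| = n-k+1} ∑_{j ∈ A} q_j(A ∖ {j}) (φ(A) - φ(A ∖ {j}))`.
Under the hypothesis every such `q_j(A ∖ {j})` equals `1 / (k C(n,k))`. Möbius inversion
`φ(A) = ∑_{B ⊆ A} d(B)` gives `∑_{j ∈ A} (φ(A) - φ(A ∖ {j})) = ∑_{B ⊆ A} |B| d(B)`, and each `B`
lies in `C(n - |B|, k - 1)` sets `A` of size `n - k + 1`.
-/

open MeasureTheory Finset

/-- Lifetime of the (sub)system on component set `D` with structure function `χ`
(the maximum over the sets `A ⊆ D` with `χ A = 1` of `min_{i ∈ A} T i`). -/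
noncomputable def sysLifeOn {Ω : Type*} {n : ℕ} (T : Fin n → Ω → ℝ)
    (D : Finset (Fin n)) (χ : Finset (Fin n) → ℝ) (ω : Ω) : ℝ :=
  if h : (D.powerset.filter fun A => χ A = 1).Nonempty then
    (D.powerset.filter fun A => χ A = 1).sup' h
      (fun A => if hA : A.Nonempty then A.inf' hA fun i => T i ω else 0)
  else 0

/-- The `k`-th order statistic of the lifetimes `(T i)_{i ∈ M}`. -/
noncomputable def orderStat {Ω : Type*} {n : ℕ} (T : Fin n → Ω → ℝ)
    (M : Finset (Fin n)) (k : ℕ) (ω : Ω) : ℝ :=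
  ((M.val.map fun i => T i ω).sort (· ≤ ·)).getD (k - 1) 0

/-- The relative quality function `q_j(A) = Pr(max_{i ∈ C∖A} T_i = T_j < min_{i ∈ A} T_i)`. -/
noncomputable def relQual {Ω : Type*} [MeasurableSpace Ω] {n : ℕ} (μ : Measure Ω)
    (T : Fin n → Ω → ℝ) (j : Fin n) (A : Finset (Fin n)) : ℝ :=
  (μ {ω | (∀ i ∉ A, T i ω ≤ T j ω) ∧ ∀ i ∈ A, T j ω < T i ω}).toReal

/-- `min_{i ∈ A} T i` (with junk value `0` when `A = ∅`). -/
noncomputable def minOnLife {Ω : Type*} {n : ℕ} (T : Fin n → Ω → ℝ)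
    (A : Finset (Fin n)) (ω : Ω) : ℝ :=
  if h : A.Nonempty then A.inf' h fun i => T i ω else 0

/-- The signed domination function `d(A) = ∑_{B ⊆ A} (-1)^{|A|-|B|} φ(B)`. -/
noncomputable def signedDom {n : ℕ} (φ : Finset (Fin n) → ℝ) (A : Finset (Fin n)) : ℝ :=
  ∑ B ∈ A.powerset, (-1 : ℝ) ^ (A.card - B.card) * φ B


section Moebius

lemma sum_powerset_filter_superset_neg_one_pow {α : Type*} [DecidableEq α] {A C : Finset α}
    (hCA : C ⊆ A) :
    ∑ B ∈ A.powerset with C ⊆ B, (-1 : ℝ) ^ (#B - #C) = if C = A then 1 else 0 := by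
  have hIcc : {B ∈ A.powerset | C ⊆ B} = Icc C A := by ext; simp [and_comm]
  have hinj : Set.InjOn (C ∪ ·) ((A \ C).powerset : Set (Finset α)) := fun D hD E hE h => by
    have hD' : Disjoint C D := disjoint_of_subset_right (mem_powerset.1 hD) disjoint_sdiff
    have hE' : Disjoint C E := disjoint_of_subset_right (mem_powerset.1 hE) disjoint_sdiff
    simpa [union_sdiff_cancel_left hD', union_sdiff_cancel_left hE'] using congrArg (· \ C) h
  rw [hIcc, Icc_eq_image_powerset hCA, sum_image hinj]
  have hsum := congrArg (Int.cast : ℤ → ℝ) (sum_powerset_neg_one_pow_card (x := A \ C))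
  push_cast [apply_ite (Int.cast : ℤ → ℝ)] at hsum
  rw [sum_congr rfl fun D hD => by
    rw [card_union_of_disjoint (disjoint_of_subset_right (mem_powerset.1 hD) disjoint_sdiff),
      Nat.add_sub_cancel_left], hsum]
  simp only [sdiff_eq_empty_iff_subset]
  exact if_congr ⟨fun h => hCA.antisymm h, fun h => h ▸ subset_rfl⟩ rfl rfl

variable {n : ℕ} (φ : Finset (Fin n) → ℝ)

theorem sum_powerset_signedDom (A : Finset (Fin n)) :
    ∑ B ∈ A.powerset, signedDom φ B = φ A := by
  simp only [signedDom]
  rw [sum_comm' (t' := A.powerset) (s' := fun C => {B ∈ A.powerset | C ⊆ B}) (fun B C => by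
    simp only [mem_powerset, mem_filter]
    exact ⟨fun h => ⟨⟨h.1, h.2⟩, h.2.trans h.1⟩, fun h => ⟨h.1.1, h.1.2⟩⟩)]
  simp_rw [← sum_mul]
  rw [sum_congr rfl fun C hC => by rw [sum_powerset_filter_superset_neg_one_pow (mem_powerset.1 hC)]]
  simp

theorem sub_erase_eq_sum_signedDom (A : Finset (Fin n)) (j : Fin n) :
    φ A - φ (A.erase j) = ∑ B ∈ A.powerset with j ∈ B, signedDom φ B := by
  have hsplit : {B ∈ A.powerset | j ∉ B} = (A.erase j).powerset := by
    ext B; simp [subset_erase]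
  rw [← sum_powerset_signedDom φ A, ← sum_powerset_signedDom φ (A.erase j), ← hsplit,
    ← sum_filter_add_sum_filter_not A.powerset (j ∈ ·), add_sub_cancel_right]

theorem sum_sub_erase_eq_sum_signedDom (A : Finset (Fin n)) :
    ∑ j ∈ A, (φ A - φ (A.erase j)) = ∑ B ∈ A.powerset, #B * signedDom φ B := by
  rw [sum_congr rfl fun j _ => sub_erase_eq_sum_signedDom φ A j]
  simp_rw [sum_filter]
  rw [sum_comm]
  refine sum_congr rfl fun B hB => ?_
  rw [← sum_filter, sum_const, nsmul_eq_mul, filter_mem_eq_inter,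
    inter_eq_right.2 (mem_powerset.1 hB)]

end Moebius

lemma sum_powersetCard_sum_powerset {α M : Type*} [DecidableEq α] [AddCommMonoid M]
    (s : Finset α) (m : ℕ) (f : Finset α → M) :
    ∑ A ∈ s.powersetCard m, ∑ B ∈ A.powerset, f B =
      ∑ B ∈ s.powerset with #B ≤ m, (#s - #B).choose (m - #B) • f B := by
  rw [sum_comm' (t' := {B ∈ s.powerset | #B ≤ m}) (s' := fun B => {A ∈ s.powersetCard m | B ⊆ A})
    (fun A B => by
      simp only [mem_powersetCard, mem_powerset, mem_filter]
      exact ⟨fun h => ⟨⟨h.1, h.2⟩, h.2.trans h.1.1, h.1.2 ▸ card_le_card h.2⟩,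
        fun h => ⟨h.1.1, h.1.2⟩⟩)]
  refine sum_congr rfl fun B hB => ?_
  rw [mem_filter, mem_powerset] at hB
  rw [sum_const, card_filter_powersetCard_subset B s m hB.1 hB.2]

lemma card_filter_lt_orderEmbOfFin {α : Type*} [LinearOrder α] (s : Finset α) {k : ℕ}
    (h : #s = k) (i : Fin k) : #{y ∈ s | s.orderEmbOfFin h i < y} = k - 1 - i := by
  set f := s.orderEmbOfFin h with hf
  clear_value f
  have hs : univ.map f.toEmbedding = s := hf ▸ map_orderEmbOfFin_univ s h
  rw [← hs, filter_map, card_map]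
  simp only [Function.comp_def, RelEmbedding.coe_toEmbedding, OrderEmbedding.lt_iff_lt]
  rw [← Fin.card_Ioi]
  congr 1
  ext; simp

section Lifetimes

variable {Ω : Type*} {n : ℕ} (T : Fin n → Ω → ℝ)

noncomputable def outlivers (j : Fin n) (ω : Ω) : Finset (Fin n) := {i | T j ω < T i ω}

lemma outlivers_eq_iff {j : Fin n} {ω : Ω} {A : Finset (Fin n)} :
    outlivers T j ω = A ↔ (∀ i ∉ A, T i ω ≤ T j ω) ∧ ∀ i ∈ A, T j ω < T i ω := by
  simp only [outlivers, Finset.ext_iff, mem_filter, mem_univ, true_and]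
  exact ⟨fun h => ⟨fun i hi => not_lt.1 fun hlt => hi ((h i).1 hlt), fun i hi => (h i).2 hi⟩,
    fun h i => ⟨fun hlt => by_contra fun hi => (h.1 i hi).not_gt hlt, h.2 i⟩⟩

lemma relQual_eq [MeasurableSpace Ω] (μ : Measure Ω) (j : Fin n) (A : Finset (Fin n)) :
    relQual μ T j A = (μ {ω | outlivers T j ω = A}).toReal := by
  simp only [relQual, outlivers_eq_iff]

lemma measurableSet_outlivers_eq [MeasurableSpace Ω] (hT : ∀ i, Measurable (T i)) (j : Fin n)
    (A : Finset (Fin n)) : MeasurableSet {ω | outlivers T j ω = A} := by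
  simp only [outlivers_eq_iff, Set.ofPred_and, Set.ofPred_forall]
  exact .inter (.iInter fun i => .iInter fun _ => measurableSet_le (hT i) (hT j))
    (.iInter fun i => .iInter fun _ => measurableSet_lt (hT j) (hT i))

lemma filter_le_eq_insert_outlivers {ω : Ω} (hinj : Function.Injective (T · ω)) (j : Fin n) :
    ({i | T j ω ≤ T i ω} : Finset (Fin n)) = insert j (outlivers T j ω) := by
  ext i
  simp only [outlivers, mem_filter, mem_univ, true_and, mem_insert, le_iff_lt_or_eq]
  exact ⟨fun h => h.elim Or.inr fun h => Or.inl (hinj h).symm,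
    fun h => h.elim (fun h => Or.inr (h ▸ rfl)) Or.inl⟩

lemma orderStat_eq_getElem (ω : Ω) {k : ℕ} (hk1 : 1 ≤ k) (hkn : k ≤ n) :
    orderStat T univ k ω = ((univ.val.map fun i => T i ω).sort (· ≤ ·))[k - 1]'(by simp; omega) :=
  List.getD_eq_getElem _ _ _

lemma exists_orderStat_eq (ω : Ω) {k : ℕ} (hk1 : 1 ≤ k) (hkn : k ≤ n) :
    ∃ j, orderStat T univ k ω = T j ω := by
  have hmem := List.getElem_mem (l := (univ.val.map fun i => T i ω).sort (· ≤ ·))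
    (n := k - 1) (by simp; omega)
  rw [← Multiset.mem_coe, Multiset.sort_eq, Multiset.mem_map] at hmem
  obtain ⟨j, -, hj⟩ := hmem
  exact ⟨j, orderStat_eq_getElem T ω hk1 hkn ▸ hj.symm⟩

lemma orderStat_eq_iff {ω : Ω} (hinj : Function.Injective (T · ω)) {k : ℕ} (hk1 : 1 ≤ k)
    (hkn : k ≤ n) (j : Fin n) : orderStat T univ k ω = T j ω ↔ #(outlivers T j ω) = n - k := by
  set s := univ.map ⟨(T · ω), hinj⟩
  have hs : #s = n := by simp [s]
  set f := s.orderEmbOfFin hs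
  have hstat : orderStat T univ k ω = f ⟨k - 1, by omega⟩ := by
    rw [orderEmbOfFin_apply, orderStat_eq_getElem T ω hk1 hkn]; rfl
  obtain ⟨i, hi⟩ : ∃ i, f i = T j ω := by
    rw [← Set.mem_range, range_orderEmbOfFin]; simp [s]
  have hcard : #(outlivers T j ω) = n - 1 - i := by
    rw [← card_filter_lt_orderEmbOfFin s hs i, hi, outlivers, ← card_map ⟨(T · ω), hinj⟩,
      filter_map]
    rfl
  rw [hstat, ← hi, f.injective.eq_iff, Fin.ext_iff, Fin.val_mk, hcard]
  have := i.2
  omega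

end Lifetimes

section SystemLifetime

variable {Ω : Type*} {n : ℕ} (T : Fin n → Ω → ℝ) {φ : Finset (Fin n) → ℝ}

lemma exists_pathSet_forall_iff (hφ01 : ∀ A, φ A = 0 ∨ φ A = 1)
    (hφmono : ∀ A B : Finset (Fin n), A ⊆ B → φ A ≤ φ B) (D : Finset (Fin n))
    (p : Fin n → Prop) [DecidablePred p] :
    (∃ A ∈ {A ∈ D.powerset | φ A = 1}, ∀ i ∈ A, p i) ↔ φ {i ∈ D | p i} = 1 := by
  refine ⟨fun ⟨A, hA, hAp⟩ => (hφ01 _).resolve_left fun h0 => ?_, fun h => ⟨{i ∈ D | p i}, ?_, ?_⟩⟩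
  · rw [mem_filter, mem_powerset] at hA
    have hsub : A ⊆ {i ∈ D | p i} := fun i hi => mem_filter.2 ⟨hA.1 hi, hAp i hi⟩
    linarith [hφmono _ _ hsub]
  · exact mem_filter.2 ⟨mem_powerset.2 (filter_subset _ _), h⟩
  · exact fun i hi => (mem_filter.1 hi).2

lemma sysLifeOn_eq_sup' {D : Finset (Fin n)} (hne : {A ∈ D.powerset | φ A = 1}.Nonempty)
    (ω : Ω) : sysLifeOn T D φ ω = {A ∈ D.powerset | φ A = 1}.sup' hne (minOnLife T · ω) :=
  dif_pos hne

lemma pathSets_nonempty {D : Finset (Fin n)} (hD : φ D = 1) :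
    {A ∈ D.powerset | φ A = 1}.Nonempty :=
  ⟨D, mem_filter.2 ⟨mem_powerset_self D, hD⟩⟩

lemma nonempty_of_apply_eq_one (hφempty : φ ∅ = 0) {A : Finset (Fin n)} (hA : φ A = 1) :
    A.Nonempty :=
  nonempty_iff_ne_empty.2 fun h => by simp [h, hφempty] at hA

lemma minOnLife_of_nonempty {A : Finset (Fin n)} (hA : A.Nonempty) (ω : Ω) :
    minOnLife T A ω = A.inf' hA fun i => T i ω :=
  dif_pos hA

lemma le_sysLifeOn_iff (hφ01 : ∀ A, φ A = 0 ∨ φ A = 1)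
    (hφmono : ∀ A B : Finset (Fin n), A ⊆ B → φ A ≤ φ B) (hφempty : φ ∅ = 0)
    {D : Finset (Fin n)} (hD : φ D = 1) (ω : Ω) (v : ℝ) :
    v ≤ sysLifeOn T D φ ω ↔ φ {i ∈ D | v ≤ T i ω} = 1 := by
  rw [sysLifeOn_eq_sup' T (pathSets_nonempty hD), le_sup'_iff, ← exists_pathSet_forall_iff hφ01 hφmono]
  refine exists_congr fun A => and_congr_right fun hA => ?_
  rw [minOnLife_of_nonempty T (nonempty_of_apply_eq_one hφempty (mem_filter.1 hA).2), le_inf'_iff]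

lemma lt_sysLifeOn_iff (hφ01 : ∀ A, φ A = 0 ∨ φ A = 1)
    (hφmono : ∀ A B : Finset (Fin n), A ⊆ B → φ A ≤ φ B) (hφempty : φ ∅ = 0)
    {D : Finset (Fin n)} (hD : φ D = 1) (ω : Ω) (v : ℝ) :
    v < sysLifeOn T D φ ω ↔ φ {i ∈ D | v < T i ω} = 1 := by
  rw [sysLifeOn_eq_sup' T (pathSets_nonempty hD), lt_sup'_iff, ← exists_pathSet_forall_iff hφ01 hφmono]
  refine exists_congr fun A => and_congr_right fun hA => ?_
  rw [minOnLife_of_nonempty T (nonempty_of_apply_eq_one hφempty (mem_filter.1 hA).2), lt_inf'_iff]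

lemma sysLifeOn_eq_iff (hφ01 : ∀ A, φ A = 0 ∨ φ A = 1)
    (hφmono : ∀ A B : Finset (Fin n), A ⊆ B → φ A ≤ φ B) (hφempty : φ ∅ = 0)
    {D : Finset (Fin n)} (hD : φ D = 1) (ω : Ω) (v : ℝ) :
    sysLifeOn T D φ ω = v ↔ φ {i ∈ D | v ≤ T i ω} = 1 ∧ φ {i ∈ D | v < T i ω} = 0 := by
  have hne1 (A : Finset (Fin n)) : ¬φ A = 1 ↔ φ A = 0 :=
    ⟨(hφ01 A).resolve_right, fun h => by simp [h]⟩
  rw [le_antisymm_iff, and_comm, ← not_lt (a := v), le_sysLifeOn_iff T hφ01 hφmono hφempty hD,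
    lt_sysLifeOn_iff T hφ01 hφmono hφempty hD, hne1]

end SystemLifetime

section Signature

variable {Ω : Type*} {n : ℕ} (T : Fin n → Ω → ℝ)

noncomputable def criticalPairs (φ : Finset (Fin n) → ℝ) (m : ℕ) :
    Finset (Finset (Fin n) × Fin n) :=
  {p ∈ powersetCard m univ ×ˢ univ | p.2 ∈ p.1 ∧ φ p.1 = 1 ∧ φ (p.1.erase p.2) = 0}

lemma mem_criticalPairs {φ : Finset (Fin n) → ℝ} {m : ℕ} {p : Finset (Fin n) × Fin n} :
    p ∈ criticalPairs φ m ↔ #p.1 = m ∧ p.2 ∈ p.1 ∧ φ p.1 = 1 ∧ φ (p.1.erase p.2) = 0 := by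
  simp [criticalPairs]

lemma card_outlivers_injective {ω : Ω} (hinj : Function.Injective (T · ω)) :
    Function.Injective fun j => #(outlivers T j ω) := by
  have key {j j'} (hlt : T j ω < T j' ω) : #(outlivers T j' ω) < #(outlivers T j ω) := by
    have hsub : insert j' (outlivers T j' ω) ⊆ outlivers T j ω := by
      intro i hi
      simp only [outlivers, mem_insert, mem_filter, mem_univ, true_and] at hi ⊢
      exact hi.elim (fun h => h ▸ hlt) hlt.trans
    have := card_le_card hsub
    rwa [card_insert_of_notMem (by simp [outlivers])] at this
  intro j j' h
  by_contra hne
  rcases (hinj.ne hne).lt_or_gt with hlt | hlt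
  · exact (key hlt).ne h.symm
  · exact (key hlt).ne h

lemma sysLifeOn_eq_orderStat_iff {φ : Finset (Fin n) → ℝ} (hφ01 : ∀ A, φ A = 0 ∨ φ A = 1)
    (hφmono : ∀ A B : Finset (Fin n), A ⊆ B → φ A ≤ φ B) (hφempty : φ ∅ = 0)
    (hφfull : φ univ = 1) {ω : Ω} (hinj : Function.Injective (T · ω)) {k : ℕ} (hk1 : 1 ≤ k)
    (hkn : k ≤ n) :
    sysLifeOn T univ φ ω = orderStat T univ k ω ↔
      ∃ p ∈ criticalPairs φ (n - k + 1), outlivers T p.2 ω = p.1.erase p.2 := by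
  obtain ⟨j, hj⟩ := exists_orderStat_eq T ω hk1 hkn
  have hcard := (orderStat_eq_iff T hinj hk1 hkn j).1 hj
  have hj_notMem : j ∉ outlivers T j ω := by simp [outlivers]
  rw [hj, sysLifeOn_eq_iff T hφ01 hφmono hφempty hφfull, filter_le_eq_insert_outlivers T hinj]
  change φ _ = 1 ∧ φ (outlivers T j ω) = 0 ↔ _
  constructor
  · rintro ⟨h1, h0⟩
    refine ⟨(insert j (outlivers T j ω), j), mem_criticalPairs.2 ⟨?_, mem_insert_self _ _, h1, ?_⟩,
      (erase_insert hj_notMem).symm⟩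
    · rw [card_insert_of_notMem hj_notMem, hcard]
    · rwa [erase_insert hj_notMem]
  · rintro ⟨⟨A, i⟩, hp, hout⟩
    obtain ⟨hA, hiA, h1, h0⟩ := mem_criticalPairs.1 hp
    have hi : i = j := by
      refine card_outlivers_injective T hinj ?_
      simp only [hout, card_erase_of_mem hiA, hA, hcard, Nat.add_sub_cancel]
    subst hi
    rw [hout, insert_erase hiA]
    exact ⟨h1, h0⟩

lemma eq_of_mem_criticalPairs_of_outlivers {φ : Finset (Fin n) → ℝ} {m : ℕ} {ω : Ω}
    (hinj : Function.Injective (T · ω)) {p q : Finset (Fin n) × Fin n}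
    (hp : p ∈ criticalPairs φ m) (hq : q ∈ criticalPairs φ m)
    (hpω : outlivers T p.2 ω = p.1.erase p.2) (hqω : outlivers T q.2 ω = q.1.erase q.2) :
    p = q := by
  obtain ⟨hp1, hp2, -, -⟩ := mem_criticalPairs.1 hp
  obtain ⟨hq1, hq2, -, -⟩ := mem_criticalPairs.1 hq
  have h2 : p.2 = q.2 := card_outlivers_injective T hinj <| by
    simp only [hpω, hqω, card_erase_of_mem hp2, card_erase_of_mem hq2, hp1, hq1]
  refine Prod.ext ?_ h2
  rw [← insert_erase hp2, ← insert_erase hq2, ← hpω, ← hqω, h2]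

lemma sub_erase_eq_ite {φ : Finset (Fin n) → ℝ} (hφ01 : ∀ A, φ A = 0 ∨ φ A = 1)
    (hφmono : ∀ A B : Finset (Fin n), A ⊆ B → φ A ≤ φ B) (A : Finset (Fin n)) (j : Fin n) :
    φ A - φ (A.erase j) = if φ A = 1 ∧ φ (A.erase j) = 0 then 1 else 0 := by
  have := hφmono _ _ (erase_subset j A)
  rcases hφ01 A with h | h <;> rcases hφ01 (A.erase j) with h' | h'
  · simp [h, h']
  · linarith
  · simp [h, h']
  · simp [h, h']

lemma card_criticalPairs {φ : Finset (Fin n) → ℝ} (hφ01 : ∀ A, φ A = 0 ∨ φ A = 1)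
    (hφmono : ∀ A B : Finset (Fin n), A ⊆ B → φ A ≤ φ B) (m : ℕ) :
    (#(criticalPairs φ m) : ℝ) = ∑ A ∈ powersetCard m univ, ∑ j ∈ A, (φ A - φ (A.erase j)) := by
  rw [criticalPairs, card_filter, Nat.cast_sum, sum_product]
  refine sum_congr rfl fun A _ => ?_
  rw [← sum_ite_mem_eq A]
  refine sum_congr rfl fun j _ => ?_
  rw [sub_erase_eq_ite hφ01 hφmono, ← ite_and]
  push_cast
  rfl

theorem measure_sysLifeOn_eq_orderStat [MeasurableSpace Ω] (μ : Measure Ω)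
    (hT : ∀ i, Measurable (T i)) (hties : ∀ i j : Fin n, i ≠ j → μ {ω | T i ω = T j ω} = 0)
    {φ : Finset (Fin n) → ℝ} (hφ01 : ∀ A, φ A = 0 ∨ φ A = 1)
    (hφmono : ∀ A B : Finset (Fin n), A ⊆ B → φ A ≤ φ B) (hφempty : φ ∅ = 0)
    (hφfull : φ univ = 1) {k : ℕ} (hk1 : 1 ≤ k) (hkn : k ≤ n) :
    μ {ω | sysLifeOn T univ φ ω = orderStat T univ k ω} =
      ∑ p ∈ criticalPairs φ (n - k + 1), μ {ω | outlivers T p.2 ω = p.1.erase p.2} := by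
  have hinj : ∀ᵐ ω ∂μ, Function.Injective (T · ω) := by
    have hne : ∀ i j, ∀ᵐ ω ∂μ, i ≠ j → T i ω ≠ T j ω := fun i j => by
      by_cases hij : i = j
      · exact .of_forall fun _ h => absurd hij h
      · exact (measure_eq_zero_iff_ae_notMem.1 (hties i j hij)).mono fun _ h _ => h
    filter_upwards [ae_all_iff.2 fun i => ae_all_iff.2 (hne i)] with ω hω i j hij
    exact not_not.1 fun h => hω i j h hij
  have hevent : {ω | sysLifeOn T univ φ ω = orderStat T univ k ω} =ᵐ[μ]
      ⋃ p ∈ criticalPairs φ (n - k + 1), {ω | outlivers T p.2 ω = p.1.erase p.2} := by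
    filter_upwards [hinj] with ω hω
    refine propext ((sysLifeOn_eq_orderStat_iff T hφ01 hφmono hφempty hφfull hω hk1 hkn).trans ?_)
    change _ ↔ ω ∈ ⋃ p ∈ criticalPairs φ (n - k + 1), _
    simp only [Set.mem_ofPred_eq, Set.mem_iUnion, exists_prop]
  rw [measure_congr hevent]
  refine measure_biUnion_finset₀ (fun p hp q hq hpq => ?_)
    fun p _ => (measurableSet_outlivers_eq T hT _ _).nullMeasurableSet
  exact measure_eq_zero_iff_ae_notMem.2 <| hinj.mono fun ω hω ⟨hpω, hqω⟩ =>
    hpq (eq_of_mem_criticalPairs_of_outlivers T hω hp hq hpω hqω)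

end Signature

lemma mul_choose_sub_eq {n k : ℕ} (hk1 : 1 ≤ k) (hkn : k ≤ n) :
    n * (n - 1).choose (n - k) = n.choose k * k := by
  have h := Nat.add_one_mul_choose_eq (n - 1) (k - 1)
  rwa [Nat.sub_add_cancel hk1, Nat.sub_add_cancel (hk1.trans hkn),
    ← Nat.choose_symm_of_eq_add (by omega : n - 1 = n - k + (k - 1))] at h

theorem stmt_12_general {Ω : Type*} [MeasurableSpace Ω] (μ : Measure Ω) [IsProbabilityMeasure μ]
    {n : ℕ} (T : Fin n → Ω → ℝ) (hTmeas : ∀ i, Measurable (T i))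
    (hties : ∀ i j : Fin n, i ≠ j → μ {ω | T i ω = T j ω} = 0)
    (φ : Finset (Fin n) → ℝ)
    (hφ01 : ∀ A, φ A = 0 ∨ φ A = 1)
    (hφmono : ∀ A B : Finset (Fin n), A ⊆ B → φ A ≤ φ B)
    (hφempty : φ ∅ = 0) (hφfull : φ Finset.univ = 1)
    (hq : ∀ (j : Fin n) (A : Finset (Fin n)), j ∉ A →
      relQual μ T j A = 1 / ((n : ℝ) * ((n - 1).choose A.card : ℕ)))
    (k : ℕ) (hk1 : 1 ≤ k) (hkn : k ≤ n) :
    (μ {ω | sysLifeOn T Finset.univ φ ω = orderStat T Finset.univ k ω}).toReal =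
      ∑ A ∈ (Finset.univ : Finset (Fin n)).powerset.filter
          (fun A => A.card ≤ n - k + 1),
        signedDom φ A * ((A.card : ℝ) / (k : ℝ)) *
          ((((n - A.card).choose (k - 1) : ℕ) : ℝ) / ((n.choose k : ℕ) : ℝ)) := by
  have hconst : ∀ p ∈ criticalPairs φ (n - k + 1),
      (μ {ω | outlivers T p.2 ω = p.1.erase p.2}).toReal = 1 / (n * (n - 1).choose (n - k)) := by
    intro p hp
    obtain ⟨hcard, hmem, -, -⟩ := mem_criticalPairs.1 hp
    rw [← relQual_eq, hq _ _ (notMem_erase _ _), card_erase_of_mem hmem, hcard,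
      Nat.add_sub_cancel]
  rw [measure_sysLifeOn_eq_orderStat T μ hTmeas hties hφ01 hφmono hφempty hφfull hk1 hkn,
    ENNReal.toReal_sum fun p _ => measure_ne_top μ _, sum_congr rfl hconst, sum_const,
    nsmul_eq_mul, card_criticalPairs hφ01 hφmono]
  simp_rw [sum_sub_erase_eq_sum_signedDom]
  rw [sum_powersetCard_sum_powerset, card_univ, Fintype.card_fin, sum_mul]
  refine sum_congr rfl fun B hB => ?_
  have hBcard : #B ≤ n - k + 1 := (mem_filter.1 hB).2
  have hnk : (n : ℝ) * (n - 1).choose (n - k) = n.choose k * k := by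
    exact_mod_cast mul_choose_sub_eq hk1 hkn
  have hk : (k : ℝ) ≠ 0 := Nat.cast_ne_zero.2 (by omega)
  have hchoose : (n.choose k : ℝ) ≠ 0 := by exact_mod_cast (Nat.choose_pos hkn).ne'
  rw [Nat.choose_symm_of_eq_add (by omega : n - #B = n - k + 1 - #B + (k - 1)), nsmul_eq_mul,
    hnk]
  field_simp

theorem stmt_12 {Ω : Type*} [MeasurableSpace Ω] (μ : Measure Ω) [IsProbabilityMeasure μ]
    {n : ℕ} (T : Fin n → Ω → ℝ) (hTmeas : ∀ i, Measurable (T i))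
    (hTnonneg : ∀ i ω, 0 ≤ T i ω)
    (hties : ∀ i j : Fin n, i ≠ j → μ {ω | T i ω = T j ω} = 0)
    (φ : Finset (Fin n) → ℝ)
    (hφ01 : ∀ A, φ A = 0 ∨ φ A = 1)
    (hφmono : ∀ A B : Finset (Fin n), A ⊆ B → φ A ≤ φ B)
    (hφempty : φ ∅ = 0) (hφfull : φ Finset.univ = 1)
    (hq : ∀ (j : Fin n) (A : Finset (Fin n)), j ∉ A →
      relQual μ T j A = 1 / ((n : ℝ) * ((n - 1).choose A.card : ℕ)))
    (k : ℕ) (hk1 : 1 ≤ k) (hkn : k ≤ n) :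
    (μ {ω | sysLifeOn T Finset.univ φ ω = orderStat T Finset.univ k ω}).toReal =
      ∑ A ∈ (Finset.univ : Finset (Fin n)).powerset.filter
          (fun A => A.card ≤ n - k + 1),
        signedDom φ A * ((A.card : ℝ) / (k : ℝ)) *
          ((((n - A.card).choose (k - 1) : ℕ) : ℝ) / ((n.choose k : ℕ) : ℝ)) :=
  stmt_12_general μ T hTmeas hties φ hφ01 hφmono hφempty hφfull hq k hk1 hkn
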